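/- Let A ∈ {0,1} and Y, Z, W, M, D, X be random variables. Suppose h2(W,M,D,X) is an integrable measurable function satisfying E[Y − h2 | A=1, M, D, Z, X] = 0 a.s., and q0(Z,X), q1(Z,D,X) are integrable measurable functions satisfying E[A·q0 − 1 | W, X] = 0 and E[(1−A)·q1 − A·q0 | W, D, X] = 0 a.s. Then for ANY bounded measurable functions h1'(W,D,X), h0'(W,X), q2'(Z,M,D,X), one has E[ A·q0·(h1' − h0') + (1−A)·q1·(h2 − h1') + A·q2'·(Y − h2) + h0' ] = E[(1−A)·q1(Z,D,X)·h2(W,M,D,X)]. -/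

import Mathlib

/-!
The augmented integrand equals `(1 − A)·q1·h2` plus three residuals, each a bounded function
of the conditioning variables times a conditionally mean-zero factor:
`h1'(W,D,X)·((1 − A)·q1 − A·q0)`, `h0'(W,X)·(A·q0 − 1)` and `A·q2'(Z,M,D,X)·(Y − h2)`.
Pulling the bounded factor out of the conditional expectation kills each residual. The last one
is supported on `{A = 1}`, where the outcome bridge holds under `μ[|A = 1]`; its integral over
`{A = 1}` is a multiple of the integral under the conditional measure.
-/

open MeasureTheory ProbabilityTheory

section

variable {Ω β : Type*} {mΩ : MeasurableSpace Ω} {μ : Measure Ω}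

lemma integral_mul_eq_zero_of_condExp_eq_zero {m : MeasurableSpace Ω} (hm : m ≤ mΩ)
    [IsFiniteMeasure μ] {f g : Ω → ℝ} (hf : StronglyMeasurable[m] f) {C : ℝ}
    (hfC : ∀ ω, |f ω| ≤ C) (hg : Integrable g μ) (hg0 : μ[g | m] =ᵐ[μ] 0) :
    ∫ ω, f ω * g ω ∂μ = 0 := by
  have hfg0 : μ[f * g | m] =ᵐ[μ] 0 := by
    filter_upwards [condExp_stronglyMeasurable_mul_of_bound hm hf hg C (ae_of_all _ hfC), hg0]
      with ω hfg h0
    simp [hfg, h0]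
  calc ∫ ω, f ω * g ω ∂μ = ∫ ω, (μ[f * g | m]) ω ∂μ := (integral_condExp hm).symm
    _ = 0 := by simp [integral_congr_ae hfg0]

lemma integral_comp_mul_eq_zero_of_condExp_comap_eq_zero [MeasurableSpace β]
    [IsFiniteMeasure μ] {V : Ω → β} (hV : Measurable V) {φ : β → ℝ} (hφ : Measurable φ)
    {C : ℝ} (hφC : ∀ b, |φ b| ≤ C) {g : Ω → ℝ} (hg : Integrable g μ)
    (hg0 : μ[g | MeasurableSpace.comap V inferInstance] =ᵐ[μ] 0) :
    ∫ ω, φ (V ω) * g ω ∂μ = 0 :=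
  integral_mul_eq_zero_of_condExp_eq_zero (measurable_iff_comap_le.mp hV)
    (hφ.comp (comap_measurable V)).stronglyMeasurable (fun ω => hφC (V ω)) hg hg0

lemma MeasureTheory.Integrable.cond [IsFiniteMeasure μ] {f : Ω → ℝ} (hf : Integrable f μ)
    (s : Set Ω) : Integrable f μ[|s] := by
  rcases eq_or_ne (μ s) 0 with hs | hs
  · simp [cond_eq_zero_of_meas_eq_zero hs]
  · exact hf.restrict.smul_measure (ENNReal.inv_ne_top.mpr hs)

lemma setIntegral_eq_zero_of_integral_cond_eq_zero [IsFiniteMeasure μ] {s : Set Ω}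
    {f : Ω → ℝ} (hf : ∫ ω, f ω ∂μ[|s] = 0) : ∫ ω in s, f ω ∂μ = 0 := by
  rcases eq_or_ne (μ s) 0 with hs | hs
  · simp [Measure.restrict_eq_zero.mpr hs]
  · rw [ProbabilityTheory.cond, integral_smul_measure, smul_eq_zero] at hf
    exact hf.resolve_left (by simp [ENNReal.toReal_eq_zero_iff, hs, measure_ne_top])

lemma integrable_comp_mul_of_abs_le [MeasurableSpace β] {V : Ω → β} (hV : Measurable V)
    {φ : β → ℝ} (hφ : Measurable φ) {C : ℝ} (hφC : ∀ b, |φ b| ≤ C) {g : Ω → ℝ}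
    (hg : Integrable g μ) : Integrable (fun ω => φ (V ω) * g ω) μ :=
  hg.bdd_mul (hφ.comp hV).aestronglyMeasurable (ae_of_all _ fun ω => hφC (V ω))

lemma integral_indicator_comp_mul_eq_zero_of_condExp_cond_eq_zero [MeasurableSpace β]
    [IsFiniteMeasure μ] {s : Set Ω} (hs : MeasurableSet s) {V : Ω → β} (hV : Measurable V)
    {φ : β → ℝ} (hφ : Measurable φ) {C : ℝ} (hφC : ∀ b, |φ b| ≤ C) {g : Ω → ℝ}
    (hg : Integrable g μ)
    (hg0 : μ[|s][g | MeasurableSpace.comap V inferInstance] =ᵐ[μ[|s]] 0) :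
    ∫ ω, s.indicator (fun ω => φ (V ω) * g ω) ω ∂μ = 0 := by
  rw [integral_indicator hs]
  exact setIntegral_eq_zero_of_integral_cond_eq_zero
    (integral_comp_mul_eq_zero_of_condExp_comap_eq_zero hV hφ hφC (hg.cond s) hg0)

end

theorem stmt10_general
    {Ω : Type*} [mΩ : MeasurableSpace Ω] (μ : Measure Ω) [IsProbabilityMeasure μ]
    (A Y Z W M D X : Ω → ℝ)
    (hA : Measurable A) (hZ : Measurable Z) (hW : Measurable W)
    (hM : Measurable M) (hD : Measurable D) (hX : Measurable X)
    (hA01 : ∀ ω, A ω = 0 ∨ A ω = 1)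
    (h2 : ℝ × ℝ × ℝ × ℝ → ℝ)
    (hh2int : Integrable (fun ω => h2 (W ω, M ω, D ω, X ω)) μ)
    (q0 : ℝ × ℝ → ℝ)
    (hq0int : Integrable (fun ω => q0 (Z ω, X ω)) μ)
    (q1 : ℝ × ℝ × ℝ → ℝ)
    (hq1int : Integrable (fun ω => q1 (Z ω, D ω, X ω)) μ)
    (hYint : Integrable Y μ)
    (mMDZX mWX mWDX : MeasurableSpace Ω)
    (hmMDZX : mMDZX = MeasurableSpace.comap (fun ω => (M ω, D ω, Z ω, X ω)) inferInstance)
    (hmWX : mWX = MeasurableSpace.comap (fun ω => (W ω, X ω)) inferInstance)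
    (hmWDX : mWDX = MeasurableSpace.comap (fun ω => (W ω, D ω, X ω)) inferInstance)
    -- E[Y − h2 | A=1, M, D, Z, X] = 0
    (ha : ((μ[|{ω | A ω = 1}])[(fun ω => Y ω - h2 (W ω, M ω, D ω, X ω)) | mMDZX])
        =ᵐ[μ[|{ω | A ω = 1}]] 0)
    -- E[A q0 − 1 | W, X] = 0
    (hd : (μ[(fun ω => A ω * q0 (Z ω, X ω) - 1) | mWX]) =ᵐ[μ] 0)
    -- E[(1−A) q1 − A q0 | W, D, X] = 0
    (he : (μ[(fun ω => (1 - A ω) * q1 (Z ω, D ω, X ω) - A ω * q0 (Z ω, X ω)) | mWDX])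
        =ᵐ[μ] 0)
    (hq1h2 : Integrable (fun ω =>
        (1 - A ω) * q1 (Z ω, D ω, X ω) * h2 (W ω, M ω, D ω, X ω)) μ) :
    ∀ (h1' : ℝ × ℝ × ℝ → ℝ) (h0' : ℝ × ℝ → ℝ) (q2' : ℝ × ℝ × ℝ × ℝ → ℝ),
      Measurable h1' → (∃ C, ∀ p, |h1' p| ≤ C) →
      Measurable h0' → (∃ C, ∀ p, |h0' p| ≤ C) →
      Measurable q2' → (∃ C, ∀ p, |q2' p| ≤ C) →
      Integrable (fun ω =>
        A ω * q0 (Z ω, X ω) * (h1' (W ω, D ω, X ω) - h0' (W ω, X ω))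
          + (1 - A ω) * q1 (Z ω, D ω, X ω)
              * (h2 (W ω, M ω, D ω, X ω) - h1' (W ω, D ω, X ω))
          + A ω * q2' (Z ω, M ω, D ω, X ω) * (Y ω - h2 (W ω, M ω, D ω, X ω))
          + h0' (W ω, X ω)) μ →
      ∫ ω, (A ω * q0 (Z ω, X ω) * (h1' (W ω, D ω, X ω) - h0' (W ω, X ω))
          + (1 - A ω) * q1 (Z ω, D ω, X ω)
              * (h2 (W ω, M ω, D ω, X ω) - h1' (W ω, D ω, X ω))
          + A ω * q2' (Z ω, M ω, D ω, X ω) * (Y ω - h2 (W ω, M ω, D ω, X ω))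
          + h0' (W ω, X ω)) ∂μ
        = ∫ ω, (1 - A ω) * q1 (Z ω, D ω, X ω) * h2 (W ω, M ω, D ω, X ω) ∂μ := by
  intro h1' h0' q2' hh1' ⟨C1, hC1⟩ hh0' ⟨C0, hC0⟩ hq2' ⟨C2, hC2⟩ _
  subst hmMDZX hmWX hmWDX
  have hWDX : Measurable fun ω => (W ω, D ω, X ω) := hW.prod (hD.prod hX)
  have hWX : Measurable fun ω => (W ω, X ω) := hW.prod hX
  have hMDZX : Measurable fun ω => (M ω, D ω, Z ω, X ω) := hM.prod (hD.prod (hZ.prod hX))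
  -- `q2'(Z,M,D,X)` read as a function of the conditioning vector `(M,D,Z,X)`
  have hq2'_MDZX : Measurable fun p : ℝ × ℝ × ℝ × ℝ => q2' (p.2.2.1, p.1, p.2.1, p.2.2.2) :=
    hq2'.comp (by fun_prop)
  have hA1 : MeasurableSet {ω | A ω = 1} := hA (measurableSet_singleton 1)
  have hAq0 : Integrable (fun ω => A ω * q0 (Z ω, X ω)) μ :=
    hq0int.bdd_mul (c := 1) hA.aestronglyMeasurable
      (ae_of_all _ fun ω => by rcases hA01 ω with h | h <;> simp [h])
  have hAq1 : Integrable (fun ω => (1 - A ω) * q1 (Z ω, D ω, X ω)) μ :=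
    hq1int.bdd_mul (c := 1) (measurable_const.sub hA).aestronglyMeasurable
      (ae_of_all _ fun ω => by rcases hA01 ω with h | h <;> simp [h])
  set e := fun ω => (1 - A ω) * q1 (Z ω, D ω, X ω) - A ω * q0 (Z ω, X ω)
  set d := fun ω => A ω * q0 (Z ω, X ω) - 1
  set r := fun ω => q2' (Z ω, M ω, D ω, X ω) * (Y ω - h2 (W ω, M ω, D ω, X ω))
  have he_int : Integrable e μ := hAq1.sub hAq0
  have hd_int : Integrable d μ := hAq0.sub (integrable_const 1)
  have hYh2_int := hYint.sub hh2int
  have he0 : ∫ ω, h1' (W ω, D ω, X ω) * e ω ∂μ = 0 :=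
    integral_comp_mul_eq_zero_of_condExp_comap_eq_zero hWDX hh1' hC1 he_int he
  have hd0 : ∫ ω, h0' (W ω, X ω) * d ω ∂μ = 0 :=
    integral_comp_mul_eq_zero_of_condExp_comap_eq_zero hWX hh0' hC0 hd_int hd
  have hr0 : ∫ ω, {ω | A ω = 1}.indicator r ω ∂μ = 0 :=
    integral_indicator_comp_mul_eq_zero_of_condExp_cond_eq_zero hA1 hMDZX hq2'_MDZX
      (fun _ => hC2 _) hYh2_int ha
  have he_term : Integrable (fun ω => h1' (W ω, D ω, X ω) * e ω) μ :=
    integrable_comp_mul_of_abs_le hWDX hh1' hC1 he_int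
  have hd_term : Integrable (fun ω => h0' (W ω, X ω) * d ω) μ :=
    integrable_comp_mul_of_abs_le hWX hh0' hC0 hd_int
  have hr_term : Integrable ({ω | A ω = 1}.indicator r) μ :=
    (integrable_comp_mul_of_abs_le hMDZX hq2'_MDZX (fun _ => hC2 _) hYh2_int).indicator hA1
  calc _ = ∫ ω, ((1 - A ω) * q1 (Z ω, D ω, X ω) * h2 (W ω, M ω, D ω, X ω)
          - h1' (W ω, D ω, X ω) * e ω - h0' (W ω, X ω) * d ω
          + {ω | A ω = 1}.indicator r ω) ∂μ := by
        congr 1 with ω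
        rcases hA01 ω with h | h <;> simp [e, d, r, h] <;> ring
    _ = _ := by
        rw [integral_add ?_ hr_term, integral_sub ?_ hd_term, integral_sub hq1h2 he_term, he0, hd0,
          hr0]
        · ring
        · exact hq1h2.sub he_term
        · exact (hq1h2.sub he_term).sub hd_term

/-- if `h2` solves its outcome bridge equation and `q0, q1` solve their
treatment bridge equations, then for ANY bounded measurable `h1', h0', q2'` the
augmented functional equals the hybrid formula `E[(1−A)·q1·h2]`. -/
theorem stmt10
    {Ω : Type*} [mΩ : MeasurableSpace Ω] (μ : Measure Ω) [IsProbabilityMeasure μ]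
    (A Y Z W M D X : Ω → ℝ)
    (hA : Measurable A) (hY : Measurable Y) (hZ : Measurable Z) (hW : Measurable W)
    (hM : Measurable M) (hD : Measurable D) (hX : Measurable X)
    (hA01 : ∀ ω, A ω = 0 ∨ A ω = 1)
    (h2 : ℝ × ℝ × ℝ × ℝ → ℝ) (hh2 : Measurable h2)
    (hh2int : Integrable (fun ω => h2 (W ω, M ω, D ω, X ω)) μ)
    (q0 : ℝ × ℝ → ℝ) (hq0 : Measurable q0)
    (hq0int : Integrable (fun ω => q0 (Z ω, X ω)) μ)
    (q1 : ℝ × ℝ × ℝ → ℝ) (hq1 : Measurable q1)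
    (hq1int : Integrable (fun ω => q1 (Z ω, D ω, X ω)) μ)
    (hYint : Integrable Y μ)
    (mMDZX mWX mWDX : MeasurableSpace Ω)
    (hmMDZX : mMDZX = MeasurableSpace.comap (fun ω => (M ω, D ω, Z ω, X ω)) inferInstance)
    (hmWX : mWX = MeasurableSpace.comap (fun ω => (W ω, X ω)) inferInstance)
    (hmWDX : mWDX = MeasurableSpace.comap (fun ω => (W ω, D ω, X ω)) inferInstance)
    -- E[Y − h2 | A=1, M, D, Z, X] = 0
    (ha : ((μ[|{ω | A ω = 1}])[(fun ω => Y ω - h2 (W ω, M ω, D ω, X ω)) | mMDZX])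
        =ᵐ[μ[|{ω | A ω = 1}]] 0)
    -- E[A q0 − 1 | W, X] = 0
    (hd : (μ[(fun ω => A ω * q0 (Z ω, X ω) - 1) | mWX]) =ᵐ[μ] 0)
    -- E[(1−A) q1 − A q0 | W, D, X] = 0
    (he : (μ[(fun ω => (1 - A ω) * q1 (Z ω, D ω, X ω) - A ω * q0 (Z ω, X ω)) | mWDX])
        =ᵐ[μ] 0)
    (hq1h2 : Integrable (fun ω =>
        (1 - A ω) * q1 (Z ω, D ω, X ω) * h2 (W ω, M ω, D ω, X ω)) μ) :
    ∀ (h1' : ℝ × ℝ × ℝ → ℝ) (h0' : ℝ × ℝ → ℝ) (q2' : ℝ × ℝ × ℝ × ℝ → ℝ),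
      Measurable h1' → (∃ C, ∀ p, |h1' p| ≤ C) →
      Measurable h0' → (∃ C, ∀ p, |h0' p| ≤ C) →
      Measurable q2' → (∃ C, ∀ p, |q2' p| ≤ C) →
      Integrable (fun ω =>
        A ω * q0 (Z ω, X ω) * (h1' (W ω, D ω, X ω) - h0' (W ω, X ω))
          + (1 - A ω) * q1 (Z ω, D ω, X ω)
              * (h2 (W ω, M ω, D ω, X ω) - h1' (W ω, D ω, X ω))
          + A ω * q2' (Z ω, M ω, D ω, X ω) * (Y ω - h2 (W ω, M ω, D ω, X ω))
          + h0' (W ω, X ω)) μ →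
      ∫ ω, (A ω * q0 (Z ω, X ω) * (h1' (W ω, D ω, X ω) - h0' (W ω, X ω))
          + (1 - A ω) * q1 (Z ω, D ω, X ω)
              * (h2 (W ω, M ω, D ω, X ω) - h1' (W ω, D ω, X ω))
          + A ω * q2' (Z ω, M ω, D ω, X ω) * (Y ω - h2 (W ω, M ω, D ω, X ω))
          + h0' (W ω, X ω)) ∂μ
        = ∫ ω, (1 - A ω) * q1 (Z ω, D ω, X ω) * h2 (W ω, M ω, D ω, X ω) ∂μ :=
  stmt10_general (mΩ := mΩ) μ A Y Z W M D X hA hZ hW hM hD hX hA01 h2 hh2int q0 hq0int q1 hq1int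
    hYint mMDZX mWX mWDX hmMDZX hmWX hmWDX ha hd he hq1h2
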